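/- arXiv:1512.04372 — 2 statements merged into one kernel-verified Lean document; each statement's English description precedes it below -/
import Mathlib

section
/- Let (A, m) be a two-dimensional Buchsbaum Noetherian local ring with infinite residue field and depth A > 0, let I be an m-primary ideal, let J be a minimal reduction of I, and let x, y be a superficial sequence of I with J = (x, y). Set r = r_J(I). Then for all n ≥ r, I^{n+1} : x = I^n + y^{n−r}·(I^{r+1} : x). -/
/-!
Since `J = (x, y)` is a reduction of the `𝔪`-primary ideal `I`, both `x, y` and `x, y²` are
systems of parameters, so the Buchsbaum property gives `0 : x = 0 : 𝔪` and
`(x) : y = (x) : 𝔪 = (x) : y²`. Positive depth makes `0 : 𝔪 = 0`, hence `x` is a nonzerodivisor.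
For `n = r + k` and `a ∈ I^{n+1} : x`, write `x a = x b + y c` with `b, c ∈ I^n` using
`I^{n+1} = J I^n`. Then `y c ∈ (x)`, and descending on `k` (split `c = x u + y v`; then
`y² v ∈ (x)` forces `y v ∈ (x)`) gives `y c = x a'` with `a' ∈ I^n + y^k (I^{r+1} : x)`;
cancelling `x` yields `a = b + a'`.
-/

open Ideal Filter IsLocalRing Polynomial

section Defs

variable {A : Type*} [CommRing A]

/-- The Ratliff–Rush closure of `I ^ n`, `(I^n)~ = ⋃_{t ≥ 0} (I^{n+t} : I^t)`. -/
noncomputable def ratliffRush (I : Ideal A) (n : ℕ) : Ideal A :=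
  ⨆ t : ℕ, Submodule.colon (I ^ (n + t)) ((I ^ t : Ideal A) : Set A)

/-- The Ratliff–Rush index `s(I)`: the least `m ≥ 0` such that
`Ĩ = I^{n+1} : I^n` for all `n ≥ m`. -/
noncomputable def rrIndex (I : Ideal A) : ℕ :=
  sInf {m : ℕ | ∀ n ≥ m, Submodule.colon (I ^ (n + 1)) ((I ^ n : Ideal A) : Set A) = ratliffRush I 1}

/-- The Ratliff–Rush regularity `s*(I)`: the least `m ≥ 1` such that
`(I^n)~ = I^n` for all `n ≥ m`. -/
noncomputable def rrReg (I : Ideal A) : ℕ :=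
  sInf {m : ℕ | 1 ≤ m ∧ ∀ n ≥ m, ratliffRush I n = I ^ n}

/-- `J` is a reduction of `I`. -/
def IsReduction (J I : Ideal A) : Prop :=
  J ≤ I ∧ ∃ n : ℕ, I ^ (n + 1) = J * I ^ n

/-- `J` is a minimal reduction of `I`. -/
def IsMinimalReduction (J I : Ideal A) : Prop :=
  IsReduction J I ∧ ∀ J' : Ideal A, IsReduction J' I → J' ≤ J → J' = J

/-- The reduction number `r_J(I)`. -/
noncomputable def reductionNumber (J I : Ideal A) : ℕ :=
  sInf {n : ℕ | I ^ (n + 1) = J * I ^ n}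

/-- `x ∈ I` is a superficial element for `I`. -/
def IsSuperficialElem (I : Ideal A) (x : A) : Prop :=
  x ∈ I ∧ ∃ c : ℕ, ∀ᶠ n : ℕ in atTop,
    Submodule.colon (I ^ (n + 1)) (Ideal.span {x}) ⊓ I ^ c = I ^ n

/-- `x_1, …, x_s` is a superficial sequence of `I`: for each `i`, the image of `x_i`
is a superficial element for the image of `I` in `A/(x_1, …, x_{i-1})`. -/
def IsSuperficialSeq (I : Ideal A) (xs : List A) : Prop :=
  ∀ i (h : i < xs.length),
    IsSuperficialElem (I.map (Ideal.Quotient.mk (Ideal.span {a : A | a ∈ xs.take i})))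
      (Ideal.Quotient.mk _ (xs.get ⟨i, h⟩))

/-- The Castelnuovo–Mumford regularity `reg R(I)` (equivalently `reg G(I)`) of the Rees
algebra `R(I) = ⊕_{n ≥ 0} I^n`, formalized (since graded local cohomology is not available
in Mathlib) through Trung's characterization [Tr2, Theorem 4.8]:
`reg R(I) = min{n ≥ r_J(I) | I^{n+1} ∩ ((x_1,…,x_{i-1}) : x_i) = (x_1,…,x_{i-1})I^n, i = 1,…,s}`
for a superficial sequence `x_1, …, x_s` generating a reduction `J` of `I`. -/
noncomputable def regRees (I : Ideal A) : ℕ :=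
  sInf {n : ℕ | ∃ xs : List A, IsSuperficialSeq I xs ∧
    IsReduction (Ideal.span {a : A | a ∈ xs}) I ∧
    reductionNumber (Ideal.span {a : A | a ∈ xs}) I ≤ n ∧
    ∀ i (h : i < xs.length),
      I ^ (n + 1) ⊓
          Submodule.colon (Ideal.span {a : A | a ∈ xs.take i}) (Ideal.span {xs.get ⟨i, h⟩}) =
        Ideal.span {a : A | a ∈ xs.take i} * I ^ n}

/-- `xs` is a regular sequence on `A`. -/
def IsRegularSeq (xs : List A) : Prop :=
  (∀ i (h : i < xs.length) (a : A),
      xs.get ⟨i, h⟩ * a ∈ Ideal.span {b : A | b ∈ xs.take i} →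
        a ∈ Ideal.span {b : A | b ∈ xs.take i}) ∧
  Ideal.span {b : A | b ∈ xs} ≠ ⊤

/-- The depth of `A` with respect to the ideal `J`: the supremum of the lengths of
regular sequences contained in `J`. -/
noncomputable def depthIn (J : Ideal A) : ℕ∞ :=
  sSup {n : ℕ∞ | ∃ xs : List A, (xs.length : ℕ∞) = n ∧ (∀ x ∈ xs, x ∈ J) ∧ IsRegularSeq xs}

/-- `I` is a parameter ideal (w.r.t. the maximal ideal `𝔪`): it is generated by
`dim A` elements and is `𝔪`-primary. -/
def IsParameterIdealFor (𝔪 I : Ideal A) : Prop :=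
  ∃ xs : List A, (xs.length : WithBot ℕ∞) = ringKrullDim A ∧
    I = Ideal.span {a : A | a ∈ xs} ∧ I.radical = 𝔪

/-- A local ring `B` is Buchsbaum if every system of parameters `x_1, …, x_r` satisfies
`(x_1, …, x_{i-1}) : x_i = (x_1, …, x_{i-1}) : 𝔪`. -/
def IsBuchsbaum (B : Type*) [CommRing B] [IsLocalRing B] : Prop :=
  ∀ xs : List B, (xs.length : WithBot ℕ∞) = ringKrullDim B →
    (Ideal.span {a : B | a ∈ xs}).radical = maximalIdeal B →
    ∀ i (h : i < xs.length),
      Submodule.colon (Ideal.span {a : B | a ∈ xs.take i}) (Ideal.span {xs.get ⟨i, h⟩}) =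
        Submodule.colon (Ideal.span {a : B | a ∈ xs.take i}) (maximalIdeal B)

/-- `J·R(Q)` inside the Rees algebra `R(Q)`. -/
noncomputable def mRees (J Q : Ideal A) : Ideal (reesAlgebra Q) :=
  Ideal.span ((algebraMap A (reesAlgebra Q)) '' J)

/-- `R(Q)/J·R(Q)`.  For `J = 𝔪` this is the fiber ring `F(Q) = ⊕ Q^n/𝔪Q^n`;
for `J = Q` it is the associated graded ring `G(Q) = ⊕ Q^n/Q^{n+1}`. -/
abbrev ReesQuot (J Q : Ideal A) :=
  (reesAlgebra Q) ⧸ (mRees J Q)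

/-- The ideal of the Rees algebra `R(Q)` of elements whose degree-zero component lies
in `𝔪`. -/
noncomputable def reesAug (𝔪 Q : Ideal A) : Ideal (reesAlgebra Q) where
  carrier := {p | ((p : A[X]).coeff 0) ∈ 𝔪}
  add_mem' := by
    intro a b ha hb
    simpa using Ideal.add_mem 𝔪 ha hb
  zero_mem' := by simp
  smul_mem' := by
    intro c p hp
    have : (((c * p : reesAlgebra Q) : A[X])).coeff 0 = ((c : A[X])).coeff 0 * ((p : A[X])).coeff 0 := by
      rw [MulMemClass.coe_mul, Polynomial.mul_coeff_zero]
    simpa [smul_eq_mul, this] using Ideal.mul_mem_left 𝔪 _ hp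

/-- The maximal graded ideal of `R(Q)/J·R(Q)` (for the local/graded maximal ideal `𝔪`). -/
noncomputable def gradedMax (𝔪 J Q : Ideal A) : Ideal (ReesQuot J Q) :=
  (reesAug 𝔪 Q).map (Ideal.Quotient.mk (mRees J Q))

/-- The Castelnuovo–Mumford regularity of the fiber ring `F(Q) = R(Q)/𝔪R(Q)`;
as `F(Q)` is standard graded with maximal graded ideal `𝔫`, it equals
`reg R(𝔫) = reg G(𝔫)`, which is how we formalize it. -/
noncomputable def regFiber (𝔪 Q : Ideal A) : ℕ :=
  regRees (A := ReesQuot 𝔪 Q) (gradedMax 𝔪 𝔪 Q)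

/-- `xs` is a d-sequence. -/
def IsDSequence (xs : List A) : Prop :=
  (∀ i (h : i < xs.length), xs.get ⟨i, h⟩ ∉ Ideal.span {a : A | a ∈ xs.eraseIdx i}) ∧
  ∀ i k (hik : i ≤ k) (hk : k < xs.length),
    Submodule.colon (Ideal.span {a : A | a ∈ xs.take i})
        (Ideal.span {xs.get ⟨i, lt_of_le_of_lt hik hk⟩ * xs.get ⟨k, hk⟩}) =
      Submodule.colon (Ideal.span {a : A | a ∈ xs.take i})
        (Ideal.span {xs.get ⟨i, lt_of_le_of_lt hik hk⟩})

/-- The length of a module, as the Krull dimension of its lattice of submodules. -/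
noncomputable def moduleLength (R M : Type*) [Ring R] [AddCommGroup M] [Module R M] :
    WithBot ℕ∞ :=
  Order.krullDim (Submodule R M)

end Defs

section GradedDefs

variable {k A : Type*} [CommSemiring k] [CommRing A] [Algebra k A]

/-- The initial Ratliff–Rush regularity `s*_ini(I)` of an ideal generated in degree `d`
of a graded algebra with grading `𝒜`: the least `m ≥ 1` such that
`((I^n)~)_{nd} = (I^n)_{nd}` for all `n ≥ m`. -/
noncomputable def rrRegIni (𝒜 : ℕ → Submodule k A) (I : Ideal A) (d : ℕ) : ℕ :=
  sInf {m : ℕ | 1 ≤ m ∧ ∀ n ≥ m,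
    (ratliffRush I n : Set A) ∩ (𝒜 (n * d) : Set A) =
      ((I ^ n : Ideal A) : Set A) ∩ (𝒜 (n * d) : Set A)}

end GradedDefs

section Reduction

variable {A : Type*} [CommRing A] {I J : Ideal A}

theorem IsReduction.pow_succ_eq_mul_pow (hJ : IsReduction J I) {n : ℕ}
    (hn : reductionNumber J I ≤ n) : I ^ (n + 1) = J * I ^ n := by
  induction n, hn using Nat.le_induction with
  | base => exact Nat.sInf_mem hJ.2
  | succ n _ ih => conv_lhs => rw [pow_succ, ih, mul_assoc, ← pow_succ]

theorem IsReduction.radical_eq (hJ : IsReduction J I) : J.radical = I.radical := by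
  obtain ⟨hJI, n, hn⟩ := hJ
  refine le_antisymm (radical_mono hJI) (radical_le_radical_iff.mpr fun a ha => ?_)
  refine ⟨n + 1, Ideal.mul_le_left (J := I ^ n) ?_⟩
  rw [← hn]
  exact pow_mem_pow ha _

end Reduction

theorem mem_span_pair_mul {A : Type*} [CommRing A] {x y c : A} {K : Ideal A} :
    c ∈ span {x, y} * K ↔ ∃ u ∈ K, ∃ v ∈ K, x * u + y * v = c := by
  simp only [span_insert, Ideal.sup_mul, Submodule.mem_sup, mem_span_singleton_mul]
  constructor
  · rintro ⟨_, ⟨u, hu, rfl⟩, _, ⟨v, hv, rfl⟩, rfl⟩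
    exact ⟨u, hu, v, hv, rfl⟩
  · rintro ⟨u, hu, v, hv, rfl⟩
    exact ⟨_, ⟨u, hu, rfl⟩, _, ⟨v, hv, rfl⟩, rfl⟩

theorem radical_span_pair_pow {A : Type*} [CommRing A] (x y : A) {k : ℕ} (hk : 0 < k) :
    (span {x, y ^ k}).radical = (span {x, y}).radical := by
  apply le_antisymm
  · refine radical_mono (span_le.mpr ?_)
    rintro a (rfl | rfl)
    · exact subset_span (by simp)
    · exact pow_mem_of_mem _ (subset_span (by simp)) _ hk
  · refine radical_le_radical_iff.mpr (span_le.mpr ?_)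
    rintro a (rfl | rfl)
    · exact le_radical (subset_span (by simp))
    · exact ⟨k, subset_span (by simp)⟩

theorem exists_isLeftRegular_mem_of_depthIn_pos {A : Type*} [CommRing A] {J : Ideal A}
    (h : 0 < depthIn J) : ∃ u ∈ J, IsLeftRegular u := by
  obtain ⟨_, ⟨xs, hlen, hxsJ, hreg, -⟩, hpos⟩ := lt_sSup_iff.mp h
  have hxs : 0 < xs.length := by
    rw [← hlen] at hpos
    exact_mod_cast hpos
  refine ⟨xs.get ⟨0, hxs⟩, hxsJ _ (List.get_mem _ _), ?_⟩
  refine isLeftRegular_iff_right_eq_zero_of_mul.mpr fun a ha => ?_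
  simpa using hreg 0 hxs a (by simpa using ha)

theorem isLeftRegular_of_bot_colon_eq {A : Type*} [CommRing A] {J : Ideal A} {x u : A}
    (hx : (⊥ : Ideal A).colon (span {x} : Set A) = (⊥ : Ideal A).colon (J : Set A))
    (huJ : u ∈ J) (hu : IsLeftRegular u) : IsLeftRegular x := by
  refine isLeftRegular_iff_right_eq_zero_of_mul.mpr fun a ha => ?_
  have hmem : a ∈ (⊥ : Ideal A).colon (span {x} : Set A) := by
    rw [mem_colon_span_singleton, mul_comm, ha]
    exact zero_mem _
  rw [hx, Submodule.mem_colon] at hmem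
  have hau : u * a = 0 := by simpa [mul_comm] using hmem u huJ
  exact hu.mul_left_eq_zero_iff.mp hau

theorem IsBuchsbaum.colon_eq_of_radical_span_pair {A : Type*} [CommRing A] [IsLocalRing A]
    (hB : IsBuchsbaum A) (hdim : ringKrullDim A = 2) {a b : A}
    (hab : (span {a, b}).radical = maximalIdeal A) :
    (⊥ : Ideal A).colon (span {a} : Set A) = (⊥ : Ideal A).colon (maximalIdeal A : Set A) ∧
      (span {a}).colon (span {b} : Set A) = (span {a}).colon (maximalIdeal A : Set A) := by
  have hset : {c : A | c ∈ [a, b]} = {a, b} := by ext; simp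
  have hlen : (([a, b].length : ℕ) : WithBot ℕ∞) = ringKrullDim A := by rw [hdim]; simp
  have hrad : (span {c : A | c ∈ [a, b]}).radical = maximalIdeal A := by rw [hset]; exact hab
  have h0 := hB [a, b] hlen hrad 0 (by simp)
  have h1 := hB [a, b] hlen hrad 1 (by simp)
  simp only [List.take_zero, List.take_succ_cons, List.not_mem_nil, Set.ofPred_false,
    span_empty, List.mem_singleton, Set.ofPred_eq_eq_singleton, List.get] at h0 h1
  exact ⟨h0, h1⟩

section ColonFormula

variable {A : Type*} [CommRing A] {I : Ideal A} {x y : A} {r : ℕ}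

theorem mul_mem_span_singleton_mul_of_mem_pow (hyI : y ∈ I)
    (hred : ∀ n, r ≤ n → I ^ (n + 1) = span {x, y} * I ^ n)
    (hy : (span {x}).colon (span {y ^ 2} : Set A) ≤ (span {x}).colon (span {y} : Set A))
    (k : ℕ) {c : A} (hc : c ∈ I ^ (r + k)) (hyc : y * c ∈ span {x}) :
    y * c ∈ span {x} * (I ^ (r + k) + span {y ^ k} * (I ^ (r + 1)).colon (span {x} : Set A)) := by
  induction k generalizing c with
  | zero =>
    obtain ⟨d, hd⟩ := mem_span_singleton'.mp hyc
    refine mem_span_singleton_mul.mpr ⟨d, Submodule.mem_sup_right ?_, by rw [← hd, mul_comm]⟩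
    rw [pow_zero, span_singleton_one, Ideal.top_mul, mem_colon_span_singleton, hd, mul_comm]
    exact mul_mem_mul hc hyI
  | succ k ih =>
    obtain ⟨u, hu, v, hv, rfl⟩ := mem_span_pair_mul.mp ((hred (r + k) (by omega)) ▸ hc)
    have hy2v : y ^ 2 * v ∈ span {x} := by
      have : y ^ 2 * v = y * (x * u + y * v) - x * (y * u) := by ring
      rw [this]
      exact sub_mem hyc (mem_span_singleton'.mpr ⟨y * u, by ring⟩)
    have hyv : y * v ∈ span {x} := by
      have := hy (mem_colon_span_singleton.mpr (by rwa [mul_comm]))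
      rwa [mem_colon_span_singleton, mul_comm] at this
    obtain ⟨a, ha, hxa⟩ := mem_span_singleton_mul.mp (ih hv hyv)
    refine mem_span_singleton_mul.mpr ⟨y * (u + a), ?_, by rw [← hxa]; ring⟩
    have hyI_mul : span {y} * I ^ (r + k) ≤ I ^ (r + (k + 1)) := by
      rw [← add_assoc, pow_succ']
      exact mul_mono_left ((span_singleton_le_iff_mem I).mpr hyI)
    have hmul : span {y} * (I ^ (r + k) + span {y ^ k} * (I ^ (r + 1)).colon (span {x} : Set A))
        ≤ I ^ (r + (k + 1)) + span {y ^ (k + 1)} * (I ^ (r + 1)).colon (span {x} : Set A) := by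
      rw [mul_add, ← mul_assoc, span_singleton_mul_span_singleton, ← pow_succ']
      exact sup_le_sup_right hyI_mul _
    exact hmul (mem_span_singleton_mul.mpr ⟨u + a, add_mem (Submodule.mem_sup_left hu) ha, rfl⟩)

theorem colon_span_singleton_pow_succ_eq (hx : IsLeftRegular x) (hxI : x ∈ I) (hyI : y ∈ I)
    (hred : ∀ n, r ≤ n → I ^ (n + 1) = span {x, y} * I ^ n)
    (hy : (span {x}).colon (span {y ^ 2} : Set A) ≤ (span {x}).colon (span {y} : Set A))
    {n : ℕ} (hn : r ≤ n) :
    (I ^ (n + 1)).colon (span {x} : Set A) =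
      I ^ n + span {y ^ (n - r)} * (I ^ (r + 1)).colon (span {x} : Set A) := by
  obtain ⟨k, rfl⟩ := Nat.exists_eq_add_of_le hn
  rw [Nat.add_sub_cancel_left]
  apply le_antisymm
  · intro a ha
    rw [mem_colon_span_singleton, mul_comm, hred _ hn] at ha
    obtain ⟨b, hb, c, hc, hbc⟩ := mem_span_pair_mul.mp ha
    have hyc : y * c ∈ span {x} := mem_span_singleton'.mpr ⟨a - b, by linear_combination -hbc⟩
    obtain ⟨a', ha', hxa'⟩ := mem_span_singleton_mul.mp
      (mul_mem_span_singleton_mul_of_mem_pow hyI hred hy k hc hyc)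
    rw [hx (show x * a = x * (b + a') by linear_combination -hbc - hxa')]
    exact add_mem (Submodule.mem_sup_left hb) ha'
  · refine sup_le (fun a ha => ?_) (Ideal.mul_le.mpr fun s hs t ht => ?_)
    · rw [mem_colon_span_singleton, pow_succ]
      exact mul_mem_mul ha hxI
    · have hs' : s ∈ I ^ k := (span_singleton_le_iff_mem _).mpr (pow_mem_pow hyI k) hs
      have hst := mul_mem_mul hs' (mem_colon_span_singleton.mp ht)
      rw [← pow_add, show k + (r + 1) = r + k + 1 by omega, ← mul_assoc] at hst
      exact mem_colon_span_singleton.mpr hst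

end ColonFormula

theorem statement_8_general {A : Type*} [CommRing A] [IsLocalRing A]
    (hdim : ringKrullDim A = 2) (hB : IsBuchsbaum A)
    (hdepth : 0 < depthIn (IsLocalRing.maximalIdeal A))
    (I : Ideal A) (hI : I.radical = IsLocalRing.maximalIdeal A)
    (x y : A)
    (hJ : IsMinimalReduction (Ideal.span {x, y}) I) :
    ∀ n : ℕ, reductionNumber (Ideal.span {x, y}) I ≤ n →
      Submodule.colon (I ^ (n + 1)) (Ideal.span {x}) =
        I ^ n + Ideal.span {y ^ (n - reductionNumber (Ideal.span {x, y}) I)} *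
          Submodule.colon (I ^ (reductionNumber (Ideal.span {x, y}) I + 1))
            (Ideal.span {x}) := by
  intro n hn
  have hxI : x ∈ I := hJ.1.1 (subset_span (by simp))
  have hyI : y ∈ I := hJ.1.1 (subset_span (by simp))
  have hrad : (span {x, y}).radical = maximalIdeal A := hJ.1.radical_eq.trans hI
  obtain ⟨hx, hxy⟩ := hB.colon_eq_of_radical_span_pair hdim hrad
  obtain ⟨-, hxy2⟩ :=
    hB.colon_eq_of_radical_span_pair hdim ((radical_span_pair_pow x y two_pos).trans hrad)
  obtain ⟨u, hum, hu⟩ := exists_isLeftRegular_mem_of_depthIn_pos hdepth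
  exact colon_span_singleton_pow_succ_eq (isLeftRegular_of_bot_colon_eq hx hum hu) hxI hyI
    (fun _ => hJ.1.pow_succ_eq_mul_pow) (hxy2.trans hxy.symm).le hn

/-- Let `A` be a two-dimensional Buchsbaum Noetherian local ring with
positive depth and infinite residue field, `I` an `𝔪`-primary ideal and `x, y` a superficial
sequence of `I` generating a minimal reduction `J = (x, y)`.  Setting `r = r_J(I)`, for every
`n ≥ r` one has `I^{n+1} : x = I^n + y^{n−r}·(I^{r+1} : x)`. -/
theorem statement_8 {A : Type*} [CommRing A] [IsNoetherianRing A] [IsLocalRing A]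
    [Infinite (IsLocalRing.ResidueField A)]
    (hdim : ringKrullDim A = 2) (hB : IsBuchsbaum A)
    (hdepth : 0 < depthIn (IsLocalRing.maximalIdeal A))
    (I : Ideal A) (hI : I.radical = IsLocalRing.maximalIdeal A)
    (x y : A) (hsup : IsSuperficialSeq I [x, y])
    (hJ : IsMinimalReduction (Ideal.span {x, y}) I) :
    ∀ n : ℕ, reductionNumber (Ideal.span {x, y}) I ≤ n →
      Submodule.colon (I ^ (n + 1)) (Ideal.span {x}) =
        I ^ n + Ideal.span {y ^ (n - reductionNumber (Ideal.span {x, y}) I)} *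
          Submodule.colon (I ^ (reductionNumber (Ideal.span {x, y}) I + 1))
            (Ideal.span {x}) :=
  statement_8_general hdim hB hdepth I hI x y hJ
end

section
/- Let k be a field, A = k[x, y], and let a ≤ b < d be positive integers. Let I = (x^d, y^d) + (x^{d−i} y^i : a ≤ i ≤ b). Then (I^n)~ = I^n for all n ≥ 1, i.e. every power of I is Ratliff-Rush closed. -/
open Ideal Filter IsLocalRing Polynomial

/-!
`I^m` is the monomial ideal generated by the `x^(m d - S) y^S` where `S` is a sum of `m` elements
of `{0, d} ∪ [a, b]`, i.e. `p a + q d ≤ S ≤ p b + q d` for some `p + q ≤ m`. As `x^d, y^d ∈ I`, an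
element `r` of `I^(n+t) : I^t` has `x^(t d) r, y^(t d) r ∈ I^(n+t)`, so it suffices to show that
this forces a monomial `x^u y^v` into `I^n`. If the generator of `I^(n+t)` dividing
`y^(t d) x^u y^v` uses at least `t` copies of `d`, removing them leaves a generator of `I^n`
dividing `x^u y^v`. Otherwise `u ≥ n (d - b)`, and either `x^(n (d - b)) y^(n b)` divides
`x^u y^v`, or the generator dividing `x^(t d) x^u y^v` has `y`-degree below `n b` and is therefore
already a generator of `I^n`.
-/

open scoped Pointwise

theorem pow_le_ratliffRush {A : Type*} [CommRing A] (I : Ideal A) (n : ℕ) :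
    I ^ n ≤ ratliffRush I n :=
  le_iSup_of_le 0 fun _ hr => Submodule.mem_colon.mpr fun _ _ => Ideal.mul_mem_right _ _ hr

namespace MvPolynomial

variable {σ R : Type*} [CommSemiring R]

theorem span_monomial_mul_span_monomial (s t : Set (σ →₀ ℕ)) :
    Ideal.span ((fun e => monomial e (1 : R)) '' s) *
        Ideal.span ((fun e => monomial e (1 : R)) '' t) =
      Ideal.span ((fun e => monomial e (1 : R)) '' (s + t)) := by
  rw [Ideal.span_mul_span', ← Set.image2_mul, ← Set.image2_add, Set.image_image2,
    Set.image2_image_left, Set.image2_image_right]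
  simp [monomial_mul]

theorem exists_le_add_of_mul_monomial_mem {s : Set (σ →₀ ℕ)} {r : MvPolynomial σ R}
    {f e : σ →₀ ℕ} (h : r * monomial f 1 ∈ Ideal.span ((fun e => monomial e (1 : R)) '' s))
    (he : e ∈ r.support) : ∃ g ∈ s, g ≤ e + f :=
  mem_ideal_span_monomial_image.mp h _ (by simpa [mem_support_iff] using he)

end MvPolynomial

namespace RatliffRushMonomial

/-- `S` is a sum of `m` elements of `{0, d} ∪ [a, b]`: a sum of `p` elements of `[a, b]` can be
any number in `[p a, p b]`. -/
def IsAdmissible (a b d m S : ℕ) : Prop :=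
  ∃ p q : ℕ, p + q ≤ m ∧ p * a + q * d ≤ S ∧ S ≤ p * b + q * d

/-- `x^u y^v ∈ I^m`. -/
def MonomialMem (a b d m u v : ℕ) : Prop :=
  ∃ S, IsAdmissible a b d m S ∧ m * d ≤ u + S ∧ S ≤ v

variable {a b d : ℕ}

theorem isAdmissible_zero_iff {S : ℕ} : IsAdmissible a b d 0 S ↔ S = 0 := by
  constructor
  · rintro ⟨p, q, hpq, -, hS⟩
    obtain ⟨rfl, rfl⟩ : p = 0 ∧ q = 0 := by omega
    simpa using hS
  · rintro rfl
    exact ⟨0, 0, by simp⟩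

theorem isAdmissible_one_iff {S : ℕ} :
    IsAdmissible a b d 1 S ↔ S = 0 ∨ S = d ∨ a ≤ S ∧ S ≤ b := by
  constructor
  · rintro ⟨p, q, hpq, hl, hr⟩
    obtain ⟨rfl, rfl⟩ | ⟨rfl, rfl⟩ | ⟨rfl, rfl⟩ :
        (p = 0 ∧ q = 0) ∨ (p = 0 ∧ q = 1) ∨ (p = 1 ∧ q = 0) := by omega
    all_goals omega
  · rintro (rfl | rfl | ⟨hl, hr⟩)
    exacts [⟨0, 0, by simp⟩, ⟨0, 1, by simp⟩, ⟨1, 0, by simpa using ⟨hl, hr⟩⟩]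

theorem IsAdmissible.add {m m' S S' : ℕ} (h : IsAdmissible a b d m S)
    (h' : IsAdmissible a b d m' S') : IsAdmissible a b d (m + m') (S + S') := by
  obtain ⟨p, q, hpq, hl, hr⟩ := h
  obtain ⟨p', q', hpq', hl', hr'⟩ := h'
  refine ⟨p + p', q + q', by omega, ?_, ?_⟩ <;> simp only [add_mul] <;> omega

theorem IsAdmissible.le_mul (hbd : b ≤ d) {m S : ℕ} (h : IsAdmissible a b d m S) :
    S ≤ m * d := by
  obtain ⟨p, q, hpq, -, hr⟩ := h
  calc S ≤ p * b + q * d := hr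
    _ ≤ p * d + q * d := by gcongr
    _ = (p + q) * d := by ring
    _ ≤ m * d := by gcongr

theorem IsAdmissible.exists_add_of_succ (hab : a ≤ b) {m S : ℕ}
    (h : IsAdmissible a b d (m + 1) S) :
    ∃ S' i, IsAdmissible a b d m S' ∧ IsAdmissible a b d 1 i ∧ S = S' + i := by
  obtain ⟨p, q, hpq, hl, hr⟩ := h
  by_cases hm : p + q ≤ m
  · exact ⟨S, 0, ⟨p, q, hm, hl, hr⟩, ⟨0, 0, by simp⟩, rfl⟩
  rcases q with _ | q
  · -- `i := max a (S - m b)` lies in `[a, b]` and leaves `S - i ∈ [m a, m b]`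
    obtain rfl : p = m + 1 := by omega
    have hmab : m * a ≤ m * b := Nat.mul_le_mul_left m hab
    simp only [add_mul, one_mul, zero_mul, add_zero] at hl hr
    refine ⟨S - max a (S - m * b), max a (S - m * b), ⟨m, 0, by omega, ?_, ?_⟩,
      ⟨1, 0, by omega, ?_, ?_⟩, ?_⟩ <;> omega
  · simp only [add_mul, one_mul] at hl hr
    exact ⟨S - d, d, ⟨p, q, by omega, by omega, by omega⟩, ⟨0, 1, by simp⟩, by omega⟩

theorem IsAdmissible.of_le_mul (hbd : b ≤ d) {m n S : ℕ} (h : IsAdmissible a b d m S)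
    (hS : S ≤ n * b) : IsAdmissible a b d n S := by
  obtain ⟨p, q, -, hl, hr⟩ := h
  rcases le_or_gt q n with hq | hq
  · rcases le_or_gt p (n - q) with hp | hp
    · exact ⟨p, q, by omega, hl, hr⟩
    · refine ⟨n - q, q, by omega, le_trans (by gcongr) hl, ?_⟩
      calc S ≤ n * b := hS
        _ = (n - q) * b + q * b := by rw [← add_mul, Nat.sub_add_cancel hq]
        _ ≤ (n - q) * b + q * d := by gcongr
  · refine ⟨0, n, by omega, ?_, ?_⟩
    · calc 0 * a + n * d ≤ q * d := by rw [zero_mul, zero_add]; gcongr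
        _ ≤ S := le_trans (Nat.le_add_left _ _) hl
    · calc S ≤ n * b := hS
        _ ≤ 0 * b + n * d := by rw [zero_mul, zero_add]; gcongr

theorem IsAdmissible.sub_mul_or (hbd : b ≤ d) {n t S : ℕ} (h : IsAdmissible a b d (n + t) S) :
    (t * d ≤ S ∧ IsAdmissible a b d n (S - t * d)) ∨ S + n * d ≤ (n + t) * d + n * b := by
  obtain ⟨p, q, hpq, hl, hr⟩ := h
  rcases le_or_gt t q with htq | htq
  · obtain ⟨q, rfl⟩ := Nat.exists_eq_add_of_le htq
    left
    simp only [add_mul] at hl hr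
    exact ⟨by omega, p, q, by omega, by omega, by omega⟩
  · right
    calc S + n * d ≤ p * b + q * d + n * d := by omega
      _ ≤ (n + t - q) * b + q * d + n * d := by gcongr; omega
      _ ≤ (n + t) * d + n * b := by
        obtain ⟨t, rfl⟩ := Nat.exists_eq_add_of_lt htq
        rw [show n + (q + t + 1) - q = n + (t + 1) by omega]
        nlinarith

theorem MonomialMem.of_shifts (hab : a ≤ b) (hbd : b ≤ d) {n t u v : ℕ}
    (hx : MonomialMem a b d (n + t) (u + t * d) v) (hy : MonomialMem a b d (n + t) u (v + t * d)) :
    MonomialMem a b d n u v := by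
  obtain ⟨S₁, h₁, hu₁, hv₁⟩ := hx
  obtain ⟨S₂, h₂, hu₂, hv₂⟩ := hy
  rw [add_mul] at hu₁ hu₂
  rcases h₂.sub_mul_or hbd with ⟨hS₂, h₂'⟩ | hS₂
  · exact ⟨S₂ - t * d, h₂', by omega, by omega⟩
  rw [add_mul] at hS₂
  by_cases hv : n * b ≤ v
  · exact ⟨n * b, ⟨n, 0, by omega, by simpa using Nat.mul_le_mul_left n hab, by simp⟩,
      by omega, hv⟩
  · exact ⟨S₁, h₁.of_le_mul hbd (by omega), by omega, hv₁⟩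

open MvPolynomial Finsupp

variable {R : Type*} [CommSemiring R]

noncomputable def genExp (d m S : ℕ) : Fin 2 →₀ ℕ := single 0 (m * d - S) + single 1 S

def genExps (a b d m : ℕ) : Set (Fin 2 →₀ ℕ) := genExp d m '' {S | IsAdmissible a b d m S}

theorem genExp_apply_zero (m S : ℕ) : genExp d m S 0 = m * d - S := by simp [genExp]

theorem genExp_apply_one (m S : ℕ) : genExp d m S 1 = S := by simp [genExp]

theorem genExp_add {m m' S S' : ℕ} (hS : S ≤ m * d) (hS' : S' ≤ m' * d) :
    genExp d m S + genExp d m' S' = genExp d (m + m') (S + S') := by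
  refine Finsupp.ext (Fin.forall_fin_two.2 ⟨?_, ?_⟩) <;>
    simp only [Finsupp.add_apply, genExp_apply_zero, genExp_apply_one, add_mul]
  omega

theorem genExp_le_iff {m S : ℕ} {e : Fin 2 →₀ ℕ} :
    genExp d m S ≤ e ↔ m * d ≤ e 0 + S ∧ S ≤ e 1 := by
  rw [Finsupp.le_def, Fin.forall_fin_two, genExp_apply_zero, genExp_apply_one,
    Nat.sub_le_iff_le_add]

theorem exists_genExps_le_iff {m : ℕ} {e : Fin 2 →₀ ℕ} :
    (∃ g ∈ genExps a b d m, g ≤ e) ↔ MonomialMem a b d m (e 0) (e 1) := by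
  simp only [genExps, Set.exists_mem_image, Set.mem_ofPred_eq, genExp_le_iff, MonomialMem]

theorem genExps_zero : genExps a b d 0 = {0} := by
  simp [genExps, genExp, isAdmissible_zero_iff]

theorem genExps_succ (hab : a ≤ b) (hbd : b ≤ d) (m : ℕ) :
    genExps a b d (m + 1) = genExps a b d m + genExps a b d 1 := by
  ext e
  simp only [genExps, Set.mem_add, Set.exists_mem_image, Set.mem_ofPred_eq]
  constructor
  · rintro ⟨S, hS, rfl⟩
    obtain ⟨S', i, hS', hi, rfl⟩ := hS.exists_add_of_succ hab
    exact ⟨S', hS', i, hi, genExp_add (hS'.le_mul hbd) (hi.le_mul hbd)⟩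
  · rintro ⟨S', hS', i, hi, rfl⟩
    exact ⟨S' + i, hS'.add hi, (genExp_add (hS'.le_mul hbd) (hi.le_mul hbd)).symm⟩

theorem span_genExps_pow (hab : a ≤ b) (hbd : b ≤ d) (m : ℕ) :
    Ideal.span ((fun e => MvPolynomial.monomial e (1 : R)) '' genExps a b d 1) ^ m =
      Ideal.span ((fun e => MvPolynomial.monomial e (1 : R)) '' genExps a b d m) := by
  induction m with
  | zero => simp [genExps_zero]
  | succ m ih => rw [pow_succ, ih, span_monomial_mul_span_monomial, genExps_succ hab hbd m]

theorem monomial_genExp (m S : ℕ) :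
    MvPolynomial.monomial (genExp d m S) (1 : R) = X 0 ^ (m * d - S) * X 1 ^ S := by
  simp [genExp, MvPolynomial.X_pow_eq_monomial, MvPolynomial.monomial_mul]

theorem generators_eq_monomial_image_genExps :
    ({X 0 ^ d, X 1 ^ d} ∪ {m | ∃ i, a ≤ i ∧ i ≤ b ∧ m = X 0 ^ (d - i) * X 1 ^ i} :
        Set (MvPolynomial (Fin 2) R)) =
      (fun e => MvPolynomial.monomial e (1 : R)) '' genExps a b d 1 := by
  ext f
  simp only [genExps, Set.image_image, Set.mem_image, Set.mem_ofPred_eq, isAdmissible_one_iff,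
    monomial_genExp, one_mul, Set.mem_union, Set.mem_insert_iff, Set.mem_singleton_iff]
  constructor
  · rintro ((rfl | rfl) | ⟨i, hai, hib, rfl⟩)
    · exact ⟨0, Or.inl rfl, by simp⟩
    · exact ⟨d, Or.inr (Or.inl rfl), by simp⟩
    · exact ⟨i, Or.inr (Or.inr ⟨hai, hib⟩), rfl⟩
  · rintro ⟨S, (rfl | rfl | ⟨hai, hib⟩), rfl⟩
    · simp
    · simp
    · exact Or.inr ⟨S, hai, hib, rfl⟩

end RatliffRushMonomial

open RatliffRushMonomial MvPolynomial in
theorem statement_16_general {k : Type*} [Field k] (a b d : ℕ) (hab : a ≤ b)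
    (hbd : b < d) (I : Ideal (MvPolynomial (Fin 2) k))
    (hI : I = Ideal.span ({MvPolynomial.X 0 ^ d, MvPolynomial.X 1 ^ d} ∪
      {m | ∃ i, a ≤ i ∧ i ≤ b ∧ m = MvPolynomial.X 0 ^ (d - i) * MvPolynomial.X 1 ^ i})) :
    ∀ n : ℕ, 1 ≤ n → ratliffRush I n = I ^ n := by
  intro n _
  have hpow (m : ℕ) :
      I ^ m = Ideal.span ((fun e => MvPolynomial.monomial e (1 : k)) '' genExps a b d m) := by
    rw [hI, generators_eq_monomial_image_genExps, span_genExps_pow hab hbd.le]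
  refine le_antisymm (iSup_le fun t r hr => ?_) (pow_le_ratliffRush I n)
  have hmem (i : Fin 2) :
      r * MvPolynomial.monomial (Finsupp.single i (t * d)) 1 ∈ I ^ (n + t) := by
    have hXi : X i ^ d ∈ I := hI ▸ Ideal.subset_span (by fin_cases i <;> simp)
    have := Submodule.mem_colon.mp hr _ (Ideal.pow_mem_pow hXi t)
    rwa [← pow_mul, mul_comm d t, MvPolynomial.X_pow_eq_monomial, smul_eq_mul] at this
  rw [hpow] at hmem ⊢
  refine mem_ideal_span_monomial_image.mpr fun e he => exists_genExps_le_iff.mpr ?_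
  have hshift (i : Fin 2) :=
    exists_genExps_le_iff.mp (exists_le_add_of_mul_monomial_mem (hmem i) he)
  exact MonomialMem.of_shifts hab hbd.le (by simpa using hshift 0) (by simpa using hshift 1)

/-- For positive integers `a ≤ b < d` and
`I = (x^d, y^d) + (x^{d−i}y^i : a ≤ i ≤ b)` in `k[x, y]`, every power of `I` is
Ratliff–Rush closed. -/
theorem statement_16 {k : Type*} [Field k] (a b d : ℕ) (ha : 1 ≤ a) (hab : a ≤ b)
    (hbd : b < d) (I : Ideal (MvPolynomial (Fin 2) k))
    (hI : I = Ideal.span ({MvPolynomial.X 0 ^ d, MvPolynomial.X 1 ^ d} ∪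
      {m | ∃ i, a ≤ i ∧ i ≤ b ∧ m = MvPolynomial.X 0 ^ (d - i) * MvPolynomial.X 1 ^ i})) :
    ∀ n : ℕ, 1 ≤ n → ratliffRush I n = I ^ n :=
  statement_16_general a b d hab hbd I hI
end
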